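/- arXiv:0706.0332 — 6 statements merged into one kernel-verified Lean document; each statement's English description precedes it below -/
import Mathlib

section
/- (Berger's lemma, pinched version.) Let R be an algebraic curvature tensor on ℝⁿ, let k > 0 and 0 ≤ δ, and assume the pinching condition: for all X, Y ∈ ℝⁿ, ((1+δ)/4)·k·(|X|²|Y|² − ⟨X,Y⟩²) ≤ R(X,Y,X,Y) ≤ (1−δ)·k·(|X|²|Y|² − ⟨X,Y⟩²). If X, Y, U, V ∈ ℝⁿ are linearly independent and Δ := ⟨X,U⟩⟨Y,V⟩ − ⟨X,V⟩⟨Y,U⟩ = 0, then 6·|R(X,Y,U,V)| ≤ ((3−5δ)/(5−3δ))·(2R(X,Y,X,Y) + 2R(U,V,U,V) + R(X,V,X,V) + R(V,Y,V,Y) + R(X,U,X,U) + R(U,Y,U,Y)). -/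
/-
Apply the pinching to the planes spanned by `X ± U, Y ∓ V`, `X ± V, Y ± U` and to those obtained
by `V ↦ -V`. By the symmetries and one Bianchi identity, the sectional curvatures of each family
of four planes add up to `2S ∓ 12 R(X,Y,U,V)`, with `S` the weighted sum on the right-hand side;
for the constant-curvature tensor `⟨X,U⟩⟨Y,V⟩ - ⟨X,V⟩⟨Y,U⟩` the mixed term is `Δ = 0`, so its
sums are both `2L`. Thus `2aL ≤ 2S ∓ 12R ≤ 2bL` with `a = (1+δ)k/4`, `b = (1-δ)k`, and
eliminating `L` gives `6(a+b)|R| ≤ (b-a)S`, where `(b-a)/(a+b) = (3-5δ)/(5-3δ)`. The plane of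
`X, Y` forces `a ≤ b`, so the denominator is positive.
-/

open Complex

noncomputable section

/-- An algebraic curvature tensor on `ℝⁿ`, given by its coefficients on the
standard basis, satisfying the usual symmetries and the first Bianchi identity.
(A multilinear map `(ℝⁿ)⁴ → ℝ` with these symmetries is equivalent to such data.) -/
structure AlgCurv (n : ℕ) where
  R : Fin n → Fin n → Fin n → Fin n → ℝ
  skew₁ : ∀ i j k l, R i j k l = - R j i k l
  skew₂ : ∀ i j k l, R i j k l = - R i j l k
  pair_symm : ∀ i j k l, R i j k l = R k l i j
  bianchi : ∀ i j k l, R i j k l + R j k i l + R k i j l = 0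

namespace AlgCurv

variable {n : ℕ}

/-- The multilinear map `(ℝⁿ)⁴ → ℝ` determined by the coefficients. -/
def evalR (T : AlgCurv n) (X Y U V : Fin n → ℝ) : ℝ :=
  ∑ i : Fin n, ∑ j : Fin n, ∑ k : Fin n, ∑ l : Fin n,
    T.R i j k l * X i * Y j * U k * V l

/-- The `ℂ`-multilinear extension to `ℂⁿ = Fin n → ℂ`. -/
def evalC (T : AlgCurv n) (Z W U V : Fin n → ℂ) : ℂ :=
  ∑ i : Fin n, ∑ j : Fin n, ∑ k : Fin n, ∑ l : Fin n,
    (T.R i j k l : ℂ) * Z i * W j * U k * V l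

end AlgCurv

/-- The standard (real) inner product on `ℝⁿ`. -/
def rInner {n : ℕ} (X Y : Fin n → ℝ) : ℝ := ∑ i : Fin n, X i * Y i

/-- The `ℂ`-bilinear (not hermitian) extension `⟨Z,W⟩ = Σᵢ Zᵢ Wᵢ`. -/
def cInner {n : ℕ} (Z W : Fin n → ℂ) : ℂ := ∑ i : Fin n, Z i * W i

/-- Entrywise complex conjugation. -/
def conjV {n : ℕ} (Z : Fin n → ℂ) : Fin n → ℂ := fun i => starRingEnd ℂ (Z i)

/-- `R` has nonnegative complex sectional curvature: `R(Z,W,Z̄,W̄)` is a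
nonnegative real number for all `Z, W ∈ ℂⁿ`. -/
def nonnegCSC {n : ℕ} (T : AlgCurv n) : Prop :=
  ∀ Z W : Fin n → ℂ, ∃ r : ℝ, 0 ≤ r ∧
    T.evalC Z W (conjV Z) (conjV W) = (r : ℂ)

/-- The complexified vector `X + iY`. -/
def cx {n : ℕ} (X Y : Fin n → ℝ) : Fin n → ℂ :=
  fun i => (X i : ℂ) + Complex.I * (Y i : ℂ)

/-- The `ℂ`-multilinear extension of the curvature tensor of constant curvature one,
`I(X,Y,Z,W) = ⟨X,Z⟩⟨Y,W⟩ − ⟨X,W⟩⟨Y,Z⟩`. -/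
def IC {n : ℕ} (Z W U V : Fin n → ℂ) : ℂ :=
  cInner Z U * cInner W V - cInner Z V * cInner W U

/-- The `p`-th standard basis vector of `ℂⁿ`. -/
def basisC {n : ℕ} (p : Fin n) : Fin n → ℂ := fun i => if i = p then 1 else 0

/-- Hamilton's reaction term `Q(R)`, evaluated on `(Z, W, U, V)`
(with `U = Z̄`, `V = W̄` in applications). -/
def Qr {n : ℕ} (T : AlgCurv n) (Z W U V : Fin n → ℂ) : ℂ :=
  (∑ p : Fin n, ∑ q : Fin n,
      T.evalC Z W (basisC p) (basisC q) * T.evalC U V (basisC p) (basisC q))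
  + 2 * (∑ p : Fin n, ∑ q : Fin n,
      T.evalC Z (basisC p) U (basisC q) * T.evalC W (basisC p) V (basisC q))
  - 2 * (∑ p : Fin n, ∑ q : Fin n,
      T.evalC Z (basisC p) V (basisC q) * T.evalC W (basisC p) U (basisC q))

/-- The `ℂ`-linear extension of a real matrix (endomorphism of `ℝⁿ`) acting on `ℂⁿ`. -/
def mulVecC {n : ℕ} (A : Matrix (Fin n) (Fin n) ℝ) (Z : Fin n → ℂ) : Fin n → ℂ :=
  fun i => ∑ j : Fin n, (A i j : ℂ) * Z j

/-- `(A ∧ id)(Z, W, Z̄, W̄)`. -/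
def wedgeId {n : ℕ} (A : Matrix (Fin n) (Fin n) ℝ) (Z W : Fin n → ℂ) : ℂ :=
  (1/2 : ℂ) * (cInner (mulVecC A Z) (conjV Z) * cInner W (conjV W)
             + cInner (mulVecC A W) (conjV W) * cInner Z (conjV Z))
  - (1/2 : ℂ) * (cInner (mulVecC A W) (conjV Z) * cInner Z (conjV W)
               + cInner (mulVecC A Z) (conjV W) * cInner W (conjV Z))

/-- The Ricci curvature of `R`, as a matrix:  `⟨Ric(R)(X), Y⟩ = Σ_p R(X, e_p, Y, e_p)`. -/
def ricM {n : ℕ} (T : AlgCurv n) : Matrix (Fin n) (Fin n) ℝ :=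
  Matrix.of fun i j => ∑ p : Fin n, T.R i p j p

structure IsCurvatureForm {E : Type*} [AddCommGroup E] (F : E → E → E → E → ℝ) : Prop where
  map_add₁ : ∀ X X' Y U V, F (X + X') Y U V = F X Y U V + F X' Y U V
  antisymm₁₂ : ∀ X Y U V, F Y X U V = -F X Y U V
  pair_comm : ∀ X Y U V, F U V X Y = F X Y U V
  bianchi : ∀ X Y U V, F X Y U V + F Y U X V + F U X Y V = 0

namespace IsCurvatureForm

variable {E : Type*} [AddCommGroup E] {F : E → E → E → E → ℝ}

theorem antisymm₃₄ (hF : IsCurvatureForm F) (X Y U V : E) : F X Y V U = -F X Y U V := by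
  rw [← hF.pair_comm, hF.antisymm₁₂, hF.pair_comm]

theorem map_add₂ (hF : IsCurvatureForm F) (X Y Y' U V : E) :
    F X (Y + Y') U V = F X Y U V + F X Y' U V := by
  rw [hF.antisymm₁₂ (Y + Y') X, hF.map_add₁, hF.antisymm₁₂ Y X, hF.antisymm₁₂ Y' X, neg_add]

theorem map_add₃ (hF : IsCurvatureForm F) (X Y U U' V : E) :
    F X Y (U + U') V = F X Y U V + F X Y U' V := by
  rw [← hF.pair_comm, hF.map_add₁, hF.pair_comm U, hF.pair_comm U']

theorem map_add₄ (hF : IsCurvatureForm F) (X Y U V V' : E) :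
    F X Y U (V + V') = F X Y U V + F X Y U V' := by
  rw [← hF.pair_comm, hF.map_add₂, hF.pair_comm U V, hF.pair_comm U V']

theorem map_sub₁ (hF : IsCurvatureForm F) (X X' Y U V : E) :
    F (X - X') Y U V = F X Y U V - F X' Y U V :=
  (AddMonoidHom.mk' (F · Y U V) (hF.map_add₁ · · Y U V)).map_sub X X'

theorem map_sub₂ (hF : IsCurvatureForm F) (X Y Y' U V : E) :
    F X (Y - Y') U V = F X Y U V - F X Y' U V :=
  (AddMonoidHom.mk' (F X · U V) (hF.map_add₂ X · · U V)).map_sub Y Y'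

theorem map_sub₃ (hF : IsCurvatureForm F) (X Y U U' V : E) :
    F X Y (U - U') V = F X Y U V - F X Y U' V :=
  (AddMonoidHom.mk' (F X Y · V) (hF.map_add₃ X Y · · V)).map_sub U U'

theorem map_sub₄ (hF : IsCurvatureForm F) (X Y U V V' : E) :
    F X Y U (V - V') = F X Y U V - F X Y U V' :=
  (AddMonoidHom.mk' (F X Y U ·) (hF.map_add₄ X Y U · ·)).map_sub V V'

theorem map_neg₁ (hF : IsCurvatureForm F) (X Y U V : E) : F (-X) Y U V = -F X Y U V :=
  (AddMonoidHom.mk' (F · Y U V) (hF.map_add₁ · · Y U V)).map_neg X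

theorem map_neg₂ (hF : IsCurvatureForm F) (X Y U V : E) : F X (-Y) U V = -F X Y U V :=
  (AddMonoidHom.mk' (F X · U V) (hF.map_add₂ X · · U V)).map_neg Y

theorem map_neg₃ (hF : IsCurvatureForm F) (X Y U V : E) : F X Y (-U) V = -F X Y U V :=
  (AddMonoidHom.mk' (F X Y · V) (hF.map_add₃ X Y · · V)).map_neg U

theorem map_neg₄ (hF : IsCurvatureForm F) (X Y U V : E) : F X Y U (-V) = -F X Y U V :=
  (AddMonoidHom.mk' (F X Y U ·) (hF.map_add₄ X Y U · ·)).map_neg V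

end IsCurvatureForm

def bergerSum {E : Type*} (F : E → E → E → E → ℝ) (X Y U V : E) : ℝ :=
  2 * F X Y X Y + 2 * F U V U V + F X V X V + F V Y V Y + F X U X U + F U Y U Y

def polarizationSum {E : Type*} [AddCommGroup E] (F : E → E → E → E → ℝ) (X Y U V : E) : ℝ :=
  F (X + U) (Y - V) (X + U) (Y - V) + F (X - U) (Y + V) (X - U) (Y + V)
    + F (X + V) (Y + U) (X + V) (Y + U) + F (X - V) (Y - U) (X - V) (Y - U)

section Polarization

variable {E : Type*} [AddCommGroup E]

theorem polarizationSum_mono {F G : E → E → E → E → ℝ} (h : ∀ A B, F A B A B ≤ G A B A B)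
    (X Y U V : E) : polarizationSum F X Y U V ≤ polarizationSum G X Y U V := by
  unfold polarizationSum
  gcongr <;> apply h

theorem polarizationSum_const_mul (c : ℝ) (F : E → E → E → E → ℝ) (X Y U V : E) :
    polarizationSum (fun A B C D => c * F A B C D) X Y U V = c * polarizationSum F X Y U V := by
  unfold polarizationSum
  ring

namespace IsCurvatureForm

variable {F G : E → E → E → E → ℝ}

theorem bergerSum_neg₄ (hF : IsCurvatureForm F) (X Y U V : E) :
    bergerSum F X Y U (-V) = bergerSum F X Y U V := by
  simp only [bergerSum, hF.map_neg₁, hF.map_neg₂, hF.map_neg₃, hF.map_neg₄, neg_neg]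

theorem polarizationSum_eq (hF : IsCurvatureForm F) (X Y U V : E) :
    polarizationSum F X Y U V = 2 * bergerSum F X Y U V - 12 * F X Y U V := by
  simp only [polarizationSum, bergerSum, hF.map_add₁, hF.map_sub₁, hF.map_add₂, hF.map_sub₂,
    hF.map_add₃, hF.map_sub₃, hF.map_add₄, hF.map_sub₄]
  linarith [hF.pair_comm X Y U V, hF.pair_comm X V U Y, hF.pair_comm X Y V U,
    hF.pair_comm X U V Y, hF.pair_comm X V Y U, hF.antisymm₁₂ U V V U, hF.antisymm₁₂ X U Y V,
    hF.antisymm₃₄ X Y U V, hF.antisymm₃₄ U V U V, hF.antisymm₃₄ X V U Y, hF.antisymm₃₄ X U V Y,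
    hF.bianchi X Y U V]

theorem abs_le_of_pinched (hF : IsCurvatureForm F) (hG : IsCurvatureForm G) {a b : ℝ}
    (ha : 0 ≤ a) (hb : 0 ≤ b)
    (hpinch : ∀ A B, a * G A B A B ≤ F A B A B ∧ F A B A B ≤ b * G A B A B)
    {X Y U V : E} (hG₀ : G X Y U V = 0) :
    6 * (a + b) * |F X Y U V| ≤ (b - a) * bergerSum F X Y U V := by
  have lower (W : E) : a * polarizationSum G X Y U W ≤ polarizationSum F X Y U W := by
    rw [← polarizationSum_const_mul]
    exact polarizationSum_mono (fun A B => (hpinch A B).1) X Y U W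
  have upper (W : E) : polarizationSum F X Y U W ≤ b * polarizationSum G X Y U W := by
    rw [← polarizationSum_const_mul]
    exact polarizationSum_mono (fun A B => (hpinch A B).2) X Y U W
  -- Replacing `V` by `-V` flips the sign of the mixed term and keeps both Berger sums.
  have h₁ := lower V
  have h₂ := upper V
  have h₃ := lower (-V)
  have h₄ := upper (-V)
  rw [hF.polarizationSum_eq, hG.polarizationSum_eq, hG₀] at h₁ h₂
  rw [hF.polarizationSum_eq, hG.polarizationSum_eq, hF.map_neg₄, hG.map_neg₄, hG₀,
    hF.bergerSum_neg₄, hG.bergerSum_neg₄] at h₃ h₄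
  rcases abs_choice (F X Y U V) with h | h <;> rw [h]
  · linarith [mul_le_mul_of_nonneg_left h₁ hb, mul_le_mul_of_nonneg_left h₄ ha]
  · linarith [mul_le_mul_of_nonneg_left h₃ hb, mul_le_mul_of_nonneg_left h₂ ha]

end IsCurvatureForm

end Polarization

def constCurvatureForm {E : Type*} [AddCommGroup E] [Module ℝ E] (B : LinearMap.BilinForm ℝ E)
    (X Y U V : E) : ℝ :=
  B X U * B Y V - B X V * B Y U

theorem isCurvatureForm_constCurvatureForm {E : Type*} [AddCommGroup E] [Module ℝ E]
    {B : LinearMap.BilinForm ℝ E} (hB : B.IsSymm) : IsCurvatureForm (constCurvatureForm B) where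
  map_add₁ X X' Y U V := by
    simp only [constCurvatureForm, map_add, LinearMap.add_apply]
    ring
  antisymm₁₂ X Y U V := by
    simp only [constCurvatureForm]
    ring
  pair_comm X Y U V := by
    simp only [constCurvatureForm, hB.eq U X, hB.eq V Y, hB.eq U Y, hB.eq V X]
    ring
  bianchi X Y U V := by
    simp only [constCurvatureForm, hB.eq Y X, hB.eq U X, hB.eq U Y]
    ring

namespace AlgCurv
variable {n : ℕ}

theorem evalR_add₁ (T : AlgCurv n) (X X' Y U V : Fin n → ℝ) :
    T.evalR (X + X') Y U V = T.evalR X Y U V + T.evalR X' Y U V := by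
  simp only [evalR, Pi.add_apply, mul_add, add_mul, Finset.sum_add_distrib]

theorem evalR_antisymm₁₂ (T : AlgCurv n) (X Y U V : Fin n → ℝ) :
    T.evalR Y X U V = -T.evalR X Y U V := by
  simp only [evalR, ← Finset.sum_neg_distrib]
  rw [Finset.sum_comm]
  refine Finset.sum_congr rfl fun i _ => Finset.sum_congr rfl fun j _ =>
    Finset.sum_congr rfl fun k _ => Finset.sum_congr rfl fun l _ => ?_
  rw [T.skew₁ j i]; ring

theorem evalR_eq_sum_prod (T : AlgCurv n) (X Y U V : Fin n → ℝ) :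
    T.evalR X Y U V = ∑ p : Fin n × Fin n, ∑ q : Fin n × Fin n,
      T.R p.1 p.2 q.1 q.2 * X p.1 * Y p.2 * U q.1 * V q.2 := by
  simp only [evalR, Fintype.sum_prod_type]

theorem evalR_pair_comm (T : AlgCurv n) (X Y U V : Fin n → ℝ) :
    T.evalR U V X Y = T.evalR X Y U V := by
  rw [evalR_eq_sum_prod, evalR_eq_sum_prod, Finset.sum_comm]
  refine Finset.sum_congr rfl fun p _ => Finset.sum_congr rfl fun q _ => ?_
  rw [T.pair_symm]; ring

theorem evalR_bianchi (T : AlgCurv n) (X Y U V : Fin n → ℝ) :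
    T.evalR X Y U V + T.evalR Y U X V + T.evalR U X Y V = 0 := by
  have h₁ : T.evalR Y U X V = ∑ i, ∑ j, ∑ k, ∑ l, T.R j k i l * X i * Y j * U k * V l := by
    conv_lhs => rw [evalR]; enter [2, a]; rw [Finset.sum_comm]
    conv_lhs => rw [Finset.sum_comm]
    refine Finset.sum_congr rfl fun i _ => Finset.sum_congr rfl fun j _ =>
      Finset.sum_congr rfl fun k _ => Finset.sum_congr rfl fun l _ => by ring
  have h₂ : T.evalR U X Y V = ∑ i, ∑ j, ∑ k, ∑ l, T.R k i j l * X i * Y j * U k * V l := by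
    conv_lhs => rw [evalR, Finset.sum_comm]; enter [2, b]; rw [Finset.sum_comm]
    refine Finset.sum_congr rfl fun i _ => Finset.sum_congr rfl fun j _ =>
      Finset.sum_congr rfl fun k _ => Finset.sum_congr rfl fun l _ => by ring
  rw [h₁, h₂, evalR]
  simp only [← Finset.sum_add_distrib]
  refine Finset.sum_eq_zero fun i _ => Finset.sum_eq_zero fun j _ =>
    Finset.sum_eq_zero fun k _ => Finset.sum_eq_zero fun l _ => ?_
  linear_combination X i * Y j * U k * V l * T.bianchi i j k l

theorem isCurvatureForm_evalR (T : AlgCurv n) : IsCurvatureForm T.evalR where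
  map_add₁ := T.evalR_add₁
  antisymm₁₂ := T.evalR_antisymm₁₂
  pair_comm := T.evalR_pair_comm
  bianchi := T.evalR_bianchi

end AlgCurv

theorem sq_rInner_lt_of_linearIndependent {n : ℕ} {X Y : Fin n → ℝ}
    (h : LinearIndependent ℝ ![X, Y]) : rInner X Y ^ 2 < rInner X X * rInner Y Y := by
  have h' : LinearIndependent ℝ ![WithLp.toLp 2 X, WithLp.toLp 2 Y] :=
    LinearIndependent.pair_iff.2 fun s t hst =>
      LinearIndependent.pair_iff.1 h s t (congrArg (WithLp.ofLp (p := 2)) hst)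
  have := (Matrix.posDef_gram_of_linearIndependent h').det_pos
  simp only [Matrix.det_fin_two, Matrix.gram, Matrix.of_apply, Matrix.cons_val_zero,
    Matrix.cons_val_one, EuclideanSpace.inner_toLp_toLp, star_trivial] at this
  change (X ⬝ᵥ Y) ^ 2 < X ⬝ᵥ X * Y ⬝ᵥ Y
  rw [dotProduct_comm Y X] at this
  linarith [sq (X ⬝ᵥ Y)]

/-- Berger's lemma, pinched version. -/
theorem berger_pinched {n : ℕ} (T : AlgCurv n) (k δ : ℝ) (hk : 0 < k) (hδ : 0 ≤ δ)
    (hpinch : ∀ X Y : Fin n → ℝ,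
      (1 + δ) / 4 * k * (rInner X X * rInner Y Y - rInner X Y ^ 2) ≤ T.evalR X Y X Y ∧
      T.evalR X Y X Y ≤ (1 - δ) * k * (rInner X X * rInner Y Y - rInner X Y ^ 2))
    (X Y U V : Fin n → ℝ) (hli : LinearIndependent ℝ ![X, Y, U, V])
    (hΔ : rInner X U * rInner Y V - rInner X V * rInner Y U = 0) :
    6 * |T.evalR X Y U V| ≤
      (3 - 5 * δ) / (5 - 3 * δ) *
        (2 * T.evalR X Y X Y + 2 * T.evalR U V U V + T.evalR X V X V
          + T.evalR V Y V Y + T.evalR X U X U + T.evalR U Y U Y) := by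
  let B : LinearMap.BilinForm ℝ (Fin n → ℝ) := dotProductBilin ℝ ℝ
  have hB : B.IsSymm := ⟨dotProduct_comm⟩
  have hsec (A C : Fin n → ℝ) :
      constCurvatureForm B A C A C = rInner A A * rInner C C - rInner A C ^ 2 := by
    show A ⬝ᵥ A * C ⬝ᵥ C - A ⬝ᵥ C * C ⬝ᵥ A = A ⬝ᵥ A * C ⬝ᵥ C - (A ⬝ᵥ C) ^ 2
    rw [dotProduct_comm C A, sq]
  have hXY : LinearIndependent ℝ ![X, Y] := by
    convert hli.comp ![0, 1] (by decide) using 1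
    ext i : 1; fin_cases i <;> rfl
  have hL := sub_pos.2 (sq_rInner_lt_of_linearIndependent hXY)
  have hδ' : (1 + δ) / 4 ≤ 1 - δ :=
    le_of_mul_le_mul_right (a := k * (rInner X X * rInner Y Y - rInner X Y ^ 2))
      (by linarith [(hpinch X Y).1, (hpinch X Y).2]) (mul_pos hk hL)
  have key := T.isCurvatureForm_evalR.abs_le_of_pinched (isCurvatureForm_constCurvatureForm hB)
    (a := (1 + δ) / 4 * k) (b := (1 - δ) * k) (mul_nonneg (by linarith) hk.le)
    (mul_nonneg (by linarith) hk.le)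
    (fun A C => by rw [hsec]; exact hpinch A C) hΔ
  rw [div_mul_eq_mul_div, le_div_iff₀ (by linarith)]
  refine le_of_mul_le_mul_left ?_ (by positivity : 0 < k / 4)
  unfold bergerSum at key
  linarith
end
end

section
/- (Second variation at a null complex section, full form.) Let R be an algebraic curvature tensor on ℝⁿ with nonnegative complex sectional curvature, and suppose Z, W ∈ ℂⁿ satisfy R(Z, W, Z̄, W̄) = 0. Then for all Z₁, W₁ ∈ ℂⁿ, the quantity R(Z₁,W₁,Z̄,W̄) + R(Z₁,W,Z̄₁,W̄) + R(Z₁,W,Z̄,W̄₁) + R(Z,W₁,Z̄₁,W̄) + R(Z,W₁,Z̄,W̄₁) + R(Z,W,Z̄₁,W̄₁) is a real number and is ≥ 0. -/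
open Complex

noncomputable section

/-!
For real `t` put `f(t) = R(Z + tZ₁, W + tW₁, Z̄ + tZ̄₁, W̄ + tW̄₁)`. Because `R(Z,W,Z̄,W̄) = 0`,
the odd powers cancel in `f(t) + f(-t) = 2t²S + 2t⁴A`, where `A = R(Z₁,W₁,Z̄₁,W̄₁)` and `S`
is the second-variation sum. Both `f(±t)` are nonnegative reals, so `t²S + t⁴A` is a
nonnegative real for every real `t`: comparing `t = 1` and `t = 2` shows that `S` is real,
and dividing by `t²` and letting `t → 0` gives `S ≥ 0`.
-/

open Filter Topology

lemma nonneg_of_forall_sq_mul_add_pow_four_mul_nonneg {s a : ℝ}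
    (h : ∀ t : ℝ, 0 ≤ t ^ 2 * s + t ^ 4 * a) : 0 ≤ s := by
  have hpos : ∀ u > 0, 0 ≤ s + u * a := fun u hu => by
    have hu' := h √u
    rw [show √u ^ 4 = (√u ^ 2) ^ 2 by ring, Real.sq_sqrt hu.le] at hu'
    exact (mul_nonneg_iff_of_pos_left hu).mp (by linarith)
  have hlim : Tendsto (fun u => s + u * a) (𝓝[>] 0) (𝓝 s) := by
    have hcont : Continuous fun u : ℝ => s + u * a := by fun_prop
    simpa using (hcont.tendsto 0).mono_left nhdsWithin_le_nhds
  exact ge_of_tendsto hlim (eventually_nhdsWithin_of_forall hpos)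

lemma exists_nonneg_ofReal_of_forall_sq_mul_add_pow_four_mul {S A : ℂ}
    (h : ∀ t : ℝ, ∃ g : ℝ, 0 ≤ g ∧ (t : ℂ) ^ 2 * S + (t : ℂ) ^ 4 * A = g) :
    ∃ s : ℝ, 0 ≤ s ∧ S = s := by
  have hpart : ∀ t : ℝ, 0 ≤ t ^ 2 * S.re + t ^ 4 * A.re ∧ t ^ 2 * S.im + t ^ 4 * A.im = 0 := by
    intro t
    obtain ⟨g, hg, e⟩ := h t
    have hre := congrArg Complex.re e
    have him := congrArg Complex.im e
    simp only [← Complex.ofReal_pow, Complex.add_re, Complex.add_im, Complex.re_ofReal_mul,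
      Complex.im_ofReal_mul, Complex.ofReal_re, Complex.ofReal_im] at hre him
    exact ⟨hre ▸ hg, him⟩
  have hS : S.im = 0 := by linarith [(hpart 1).2, (hpart 2).2]
  exact ⟨S.re, nonneg_of_forall_sq_mul_add_pow_four_mul_nonneg fun t => (hpart t).1,
    Complex.ext rfl (by simp [hS])⟩

lemma conjV_add_ofReal_smul {n : ℕ} (t : ℝ) (Z Z₁ : Fin n → ℂ) :
    conjV (Z + (t : ℂ) • Z₁) = conjV Z + (t : ℂ) • conjV Z₁ := by
  funext i
  simp [conjV]

lemma AlgCurv.evalC_add_smul_add_evalC_add_neg_smul {n : ℕ} (T : AlgCurv n)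
    (Z W U V Z₁ W₁ U₁ V₁ : Fin n → ℂ) (t : ℂ) :
    T.evalC (Z + t • Z₁) (W + t • W₁) (U + t • U₁) (V + t • V₁)
      + T.evalC (Z + (-t) • Z₁) (W + (-t) • W₁) (U + (-t) • U₁) (V + (-t) • V₁)
    = 2 * T.evalC Z W U V
      + 2 * t ^ 2 * (T.evalC Z₁ W₁ U V + T.evalC Z₁ W U₁ V + T.evalC Z₁ W U V₁
          + T.evalC Z W₁ U₁ V + T.evalC Z W₁ U V₁ + T.evalC Z W U₁ V₁)
      + 2 * t ^ 4 * T.evalC Z₁ W₁ U₁ V₁ := by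
  simp only [AlgCurv.evalC, Pi.add_apply, Pi.smul_apply, smul_eq_mul, Finset.mul_sum,
    ← Finset.sum_add_distrib]
  refine Finset.sum_congr rfl fun i _ => Finset.sum_congr rfl fun j _ =>
    Finset.sum_congr rfl fun k _ => Finset.sum_congr rfl fun l _ => ?_
  ring

/-- second variation at a null complex section, full form. -/
theorem second_variation_full {n : ℕ} (T : AlgCurv n) (hT : nonnegCSC T)
    (Z W : Fin n → ℂ) (h0 : T.evalC Z W (conjV Z) (conjV W) = 0)
    (Z₁ W₁ : Fin n → ℂ) :
    ∃ r : ℝ, 0 ≤ r ∧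
      T.evalC Z₁ W₁ (conjV Z) (conjV W) + T.evalC Z₁ W (conjV Z₁) (conjV W)
        + T.evalC Z₁ W (conjV Z) (conjV W₁) + T.evalC Z W₁ (conjV Z₁) (conjV W)
        + T.evalC Z W₁ (conjV Z) (conjV W₁) + T.evalC Z W (conjV Z₁) (conjV W₁)
        = (r : ℂ) := by
  refine exists_nonneg_ofReal_of_forall_sq_mul_add_pow_four_mul
    (A := T.evalC Z₁ W₁ (conjV Z₁) (conjV W₁)) fun t => ?_
  obtain ⟨r₁, hr₁, e₁⟩ := hT (Z + (t : ℂ) • Z₁) (W + (t : ℂ) • W₁)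
  obtain ⟨r₂, hr₂, e₂⟩ := hT (Z + ((-t : ℝ) : ℂ) • Z₁) (W + ((-t : ℝ) : ℂ) • W₁)
  rw [conjV_add_ofReal_smul, conjV_add_ofReal_smul] at e₁ e₂
  rw [Complex.ofReal_neg] at e₂
  have hsum := T.evalC_add_smul_add_evalC_add_neg_smul Z W (conjV Z) (conjV W) Z₁ W₁
    (conjV Z₁) (conjV W₁) t
  rw [e₁, e₂, h0] at hsum
  refine ⟨(r₁ + r₂) / 2, by positivity, ?_⟩
  push_cast
  linear_combination -hsum / 2
end
end

section
/- (Second variation at a null complex section, symmetrized form.) Let R be an algebraic curvature tensor on ℝⁿ with nonnegative complex sectional curvature, and suppose Z, W ∈ ℂⁿ satisfy R(Z, W, Z̄, W̄) = 0. Then for all Z₁, W₁ ∈ ℂⁿ, 0 ≤ R(Z₁, W, Z̄₁, W̄) + R(Z, W₁, Z̄, W̄₁) + 2·Re(R(Z, W₁, Z̄₁, W̄)). -/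
open Complex

noncomputable section

/-!
For `s ∈ ℂ` the function `q s = R(Z + s Z₁, W + s W₁, Z̄ + s̄ Z̄₁, W̄ + s̄ W̄₁)` is nonnegative, vanishes
at `0`, and is a polynomial in `s, s̄` of bidegree at most `(2, 2)`. Summing over `s = ω t` with
`ω⁴ = 1` kills every monomial `sᵃ s̄ᵇ` with `a ≠ b`, leaving `4 (t² L + t⁴ R(Z₁, W₁, Z̄₁, W̄₁))`
where `L` is the coefficient of `|s|²`; letting `t → 0` gives `Re L ≥ 0`. The two mixed terms of
`L` are complex conjugates of each other by pair symmetry, which gives the symmetrized form.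
-/

open Filter Topology

lemma conjV_conjV {n : ℕ} (V : Fin n → ℂ) : conjV (conjV V) = V := by
  ext i
  simp [conjV]

lemma conjV_add_smul {n : ℕ} (a : ℂ) (V V' : Fin n → ℂ) :
    conjV (V + a • V') = conjV V + starRingEnd ℂ a • conjV V' := by
  ext i
  simp [conjV]

lemma nonneg_of_forall_nonneg_mul_sq_add_mul_pow_four {a b : ℝ}
    (h : ∀ t : ℝ, 0 ≤ a * t ^ 2 + b * t ^ 4) : 0 ≤ a := by
  have hcont : Continuous fun t : ℝ => a + b * t ^ 2 := by fun_prop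
  have hlim : Tendsto (fun t : ℝ => a + b * t ^ 2) (𝓝[≠] 0) (𝓝 a) := by
    simpa using (hcont.tendsto 0).mono_left nhdsWithin_le_nhds
  refine ge_of_tendsto hlim (eventually_nhdsWithin_of_forall fun t ht => ?_)
  refine nonneg_of_mul_nonneg_right ?_ (pow_pos (abs_pos.mpr ht) 2 |>.trans_eq (sq_abs t))
  linear_combination h t

namespace AlgCurv

variable {n : ℕ} (T : AlgCurv n)

lemma evalC_add_first (X X' Y U V : Fin n → ℂ) :
    T.evalC (X + X') Y U V = T.evalC X Y U V + T.evalC X' Y U V := by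
  simp [evalC, mul_add, add_mul, Finset.sum_add_distrib]

lemma evalC_add_second (X Y Y' U V : Fin n → ℂ) :
    T.evalC X (Y + Y') U V = T.evalC X Y U V + T.evalC X Y' U V := by
  simp [evalC, mul_add, add_mul, Finset.sum_add_distrib]

lemma evalC_add_third (X Y U U' V : Fin n → ℂ) :
    T.evalC X Y (U + U') V = T.evalC X Y U V + T.evalC X Y U' V := by
  simp [evalC, mul_add, add_mul, Finset.sum_add_distrib]

lemma evalC_add_fourth (X Y U V V' : Fin n → ℂ) :
    T.evalC X Y U (V + V') = T.evalC X Y U V + T.evalC X Y U V' := by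
  simp [evalC, mul_add, Finset.sum_add_distrib]

lemma evalC_smul_first (a : ℂ) (X Y U V : Fin n → ℂ) :
    T.evalC (a • X) Y U V = a * T.evalC X Y U V := by
  simp [evalC, Finset.mul_sum, mul_comm, mul_left_comm, mul_assoc]

lemma evalC_smul_second (a : ℂ) (X Y U V : Fin n → ℂ) :
    T.evalC X (a • Y) U V = a * T.evalC X Y U V := by
  simp [evalC, Finset.mul_sum, mul_comm, mul_left_comm, mul_assoc]

lemma evalC_smul_third (a : ℂ) (X Y U V : Fin n → ℂ) :
    T.evalC X Y (a • U) V = a * T.evalC X Y U V := by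
  simp [evalC, Finset.mul_sum, mul_comm, mul_left_comm, mul_assoc]

lemma evalC_smul_fourth (a : ℂ) (X Y U V : Fin n → ℂ) :
    T.evalC X Y U (a • V) = a * T.evalC X Y U V := by
  simp [evalC, Finset.mul_sum, mul_comm, mul_left_comm, mul_assoc]

lemma conj_evalC (A B C D : Fin n → ℂ) :
    starRingEnd ℂ (T.evalC A B C D) = T.evalC (conjV A) (conjV B) (conjV C) (conjV D) := by
  simp [evalC, conjV]

lemma evalC_comm (A B C D : Fin n → ℂ) : T.evalC A B C D = T.evalC C D A B := by
  simp only [evalC, ← Fintype.sum_prod_type']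
  let e : (Fin n × Fin n × Fin n × Fin n) ≃ (Fin n × Fin n × Fin n × Fin n) :=
    ⟨fun x => (x.2.2.1, x.2.2.2, x.1, x.2.1), fun x => (x.2.2.1, x.2.2.2, x.1, x.2.1),
      fun _ => rfl, fun _ => rfl⟩
  refine Fintype.sum_equiv e _ _ fun x => ?_
  simp only [e, Equiv.coe_fn_mk, T.pair_symm x.1]
  ring

lemma evalC_conjV_eq_conj (A B C D : Fin n → ℂ) :
    T.evalC C D (conjV A) (conjV B) = starRingEnd ℂ (T.evalC A B (conjV C) (conjV D)) := by
  rw [conj_evalC, conjV_conjV, conjV_conjV, evalC_comm]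

def csec (Z W : Fin n → ℂ) : ℂ := T.evalC Z W (conjV Z) (conjV W)

lemma re_csec_nonneg (hT : nonnegCSC T) (Z W : Fin n → ℂ) : 0 ≤ (T.csec Z W).re := by
  obtain ⟨r, hr, h⟩ := hT Z W
  simpa [csec, h] using hr

/-- The coefficient of `|s|²` in `T.csec (Z + s • Z₁) (W + s • W₁)`. -/
def csecLevi (Z W Z₁ W₁ : Fin n → ℂ) : ℂ :=
  T.evalC Z₁ W (conjV Z₁) (conjV W) + T.evalC Z W₁ (conjV Z) (conjV W₁)
    + T.evalC Z W₁ (conjV Z₁) (conjV W) + T.evalC Z₁ W (conjV Z) (conjV W₁)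

theorem csec_add_quarter_turns (Z W Z₁ W₁ : Fin n → ℂ) (t : ℝ) :
    T.csec (Z + (t : ℂ) • Z₁) (W + (t : ℂ) • W₁)
      + T.csec (Z + (-t : ℂ) • Z₁) (W + (-t : ℂ) • W₁)
      + T.csec (Z + (I * t) • Z₁) (W + (I * t) • W₁)
      + T.csec (Z + (-I * t) • Z₁) (W + (-I * t) • W₁)
      = 4 * (T.csec Z W + t ^ 2 * T.csecLevi Z W Z₁ W₁ + t ^ 4 * T.csec Z₁ W₁) := by
  simp only [csec, csecLevi, conjV_add_smul, evalC_add_first, evalC_add_second,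
    evalC_add_third, evalC_add_fourth, evalC_smul_first, evalC_smul_second, evalC_smul_third,
    evalC_smul_fourth, map_mul, map_neg, conj_ofReal, conj_I]
  ring_nf
  simp only [I_sq, I_pow_four]
  ring

theorem re_csecLevi_nonneg (hT : nonnegCSC T) {Z W : Fin n → ℂ} (h0 : T.csec Z W = 0)
    (Z₁ W₁ : Fin n → ℂ) : 0 ≤ (T.csecLevi Z W Z₁ W₁).re := by
  refine nonneg_of_forall_nonneg_mul_sq_add_mul_pow_four (b := (T.csec Z₁ W₁).re) fun t => ?_
  have hsum := congrArg re (T.csec_add_quarter_turns Z W Z₁ W₁ t)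
  rw [h0, zero_add, ← ofReal_pow, ← ofReal_pow] at hsum
  simp only [add_re, mul_re, re_ofNat, im_ofNat, ofReal_re, ofReal_im, zero_mul, sub_zero]
    at hsum
  linarith [T.re_csec_nonneg hT (Z + (t : ℂ) • Z₁) (W + (t : ℂ) • W₁),
    T.re_csec_nonneg hT (Z + (-t : ℂ) • Z₁) (W + (-t : ℂ) • W₁),
    T.re_csec_nonneg hT (Z + (I * t) • Z₁) (W + (I * t) • W₁),
    T.re_csec_nonneg hT (Z + (-I * t) • Z₁) (W + (-I * t) • W₁)]

end AlgCurv

/-- second variation at a null complex section, symmetrized form. -/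
theorem second_variation_symmetrized {n : ℕ} (T : AlgCurv n) (hT : nonnegCSC T)
    (Z W : Fin n → ℂ) (h0 : T.evalC Z W (conjV Z) (conjV W) = 0)
    (Z₁ W₁ : Fin n → ℂ) :
    0 ≤ (T.evalC Z₁ W (conjV Z₁) (conjV W)).re + (T.evalC Z W₁ (conjV Z) (conjV W₁)).re
        + 2 * (T.evalC Z W₁ (conjV Z₁) (conjV W)).re := by
  have hLevi := T.re_csecLevi_nonneg hT h0 Z₁ W₁
  rw [AlgCurv.csecLevi, T.evalC_conjV_eq_conj Z W₁ Z₁ W] at hLevi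
  simp only [add_re, conj_re] at hLevi
  linarith
end
end

section
/- Let A be a symmetric positive semidefinite linear endomorphism of ℝⁿ, extended ℂ-linearly to ℂⁿ. Then for all Z, W ∈ ℂⁿ, the quantity (A∧id)(Z,W,Z̄,W̄) := (1/2)·(⟨A(Z), Z̄⟩·|W|² + ⟨A(W), W̄⟩·|Z|²) − (1/2)·(⟨A(W), Z̄⟩·⟨Z, W̄⟩ + ⟨A(Z), W̄⟩·⟨W, Z̄⟩) is a real number and is ≥ 0. -/
open Complex

noncomputable section

/-! Factor `A = Bᵀ B` with `B` real. Then, with `a = BZ` and `b = BW`,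
`(A ∧ id)(Z, W, Z̄, W̄) = ½ Σₖ Σᵢ |aₖ Wᵢ − bₖ Zᵢ|²`, which is visibly real and nonnegative. -/

open scoped Matrix MatrixOrder

section

variable {n : ℕ}

lemma mulVecC_mul (M N : Matrix (Fin n) (Fin n) ℝ) (Z : Fin n → ℂ) :
    mulVecC (M * N) Z = mulVecC M (mulVecC N Z) := by
  funext i
  simp only [mulVecC, Matrix.mul_apply, Complex.ofReal_sum, Complex.ofReal_mul, Finset.sum_mul,
    Finset.mul_sum, mul_assoc]
  exact Finset.sum_comm

lemma conjV_mulVecC (M : Matrix (Fin n) (Fin n) ℝ) (Z : Fin n → ℂ) :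
    conjV (mulVecC M Z) = mulVecC M (conjV Z) := by
  funext i
  simp [conjV, mulVecC]

lemma cInner_mulVecC_left (M : Matrix (Fin n) (Fin n) ℝ) (Z U : Fin n → ℂ) :
    cInner (mulVecC M Z) U = cInner Z (mulVecC Mᵀ U) := by
  simp only [cInner, mulVecC, Matrix.transpose_apply, Finset.sum_mul, Finset.mul_sum]
  rw [Finset.sum_comm]
  exact Finset.sum_congr rfl fun _ _ => Finset.sum_congr rfl fun _ _ => by ring

lemma cInner_mulVecC_transpose_mul_self (B : Matrix (Fin n) (Fin n) ℝ) (Z W : Fin n → ℂ) :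
    cInner (mulVecC (Bᵀ * B) Z) (conjV W) = cInner (mulVecC B Z) (conjV (mulVecC B W)) := by
  rw [mulVecC_mul, cInner_mulVecC_left, Matrix.transpose_transpose, conjV_mulVecC]

lemma ofReal_sum_norm_mul_sub_mul_sq (a b Z W : Fin n → ℂ) :
    ((∑ k, ∑ i, ‖a k * W i - b k * Z i‖ ^ 2 : ℝ) : ℂ) =
      cInner a (conjV a) * cInner W (conjV W) + cInner b (conjV b) * cInner Z (conjV Z)
        - (cInner b (conjV a) * cInner Z (conjV W) + cInner a (conjV b) * cInner W (conjV Z)) := by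
  simp only [cInner, conjV, Complex.ofReal_sum, Complex.ofReal_pow, ← Complex.mul_conj',
    Finset.sum_mul_sum, ← Finset.sum_add_distrib, ← Finset.sum_sub_distrib]
  refine Finset.sum_congr rfl fun _ _ => Finset.sum_congr rfl fun _ _ => ?_
  simp only [map_sub, map_mul]
  ring

lemma wedgeId_transpose_mul_self (B : Matrix (Fin n) (Fin n) ℝ) (Z W : Fin n → ℂ) :
    wedgeId (Bᵀ * B) Z W =
      ((1 / 2 * ∑ k, ∑ i, ‖mulVecC B Z k * W i - mulVecC B W k * Z i‖ ^ 2 : ℝ) : ℂ) := by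
  rw [wedgeId, Complex.ofReal_mul, ofReal_sum_norm_mul_sub_mul_sq]
  simp only [cInner_mulVecC_transpose_mul_self]
  push_cast
  ring

lemma posSemidef_of_rInner {A : Matrix (Fin n) (Fin n) ℝ}
    (hsymm : ∀ X Y : Fin n → ℝ, rInner (A.mulVec X) Y = rInner X (A.mulVec Y))
    (hpsd : ∀ X : Fin n → ℝ, 0 ≤ rInner (A.mulVec X) X) : A.PosSemidef := by
  refine .of_dotProduct_mulVec_nonneg ?_ fun X => ?_
  · ext i j
    simpa [rInner, Matrix.mulVec, dotProduct, Pi.single_apply] using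
      hsymm (Pi.single i 1) (Pi.single j 1)
  · simpa [rInner, dotProduct, mul_comm] using hpsd X

end

/-- for a symmetric positive semidefinite endomorphism `A` of `ℝⁿ`,
`(A ∧ id)(Z, W, Z̄, W̄)` is a nonnegative real number. -/
theorem wedgeId_nonneg {n : ℕ} (A : Matrix (Fin n) (Fin n) ℝ)
    (hsymm : ∀ X Y : Fin n → ℝ, rInner (A.mulVec X) Y = rInner X (A.mulVec Y))
    (hpsd : ∀ X : Fin n → ℝ, 0 ≤ rInner (A.mulVec X) X)
    (Z W : Fin n → ℂ) :
    ∃ r : ℝ, 0 ≤ r ∧ wedgeId A Z W = (r : ℂ) := by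
  obtain ⟨B, rfl⟩ : ∃ B : Matrix (Fin n) (Fin n) ℝ, A = Bᵀ * B :=
    CStarAlgebra.nonneg_iff_eq_star_mul_self.mp (posSemidef_of_rInner hsymm hpsd).nonneg
  exact ⟨_, by positivity, wedgeId_transpose_mul_self B Z W⟩
end
end

section
/- Let R be an algebraic curvature tensor on ℝⁿ and let R̂ be the algebraic curvature tensor on ℝ^{n+2} defined by R̂(x,y,z,w) = R(π(x),π(y),π(z),π(w)), where π : ℝ^{n+2} → ℝⁿ is the projection onto the first n coordinates. Then the following are equivalent: (1) R̂ has nonnegative isotropic curvature, i.e. R̂(Ẑ, Ŵ, conj(Ẑ), conj(Ŵ)) ≥ 0 for all Ẑ, Ŵ ∈ ℂ^{n+2} with ⟨Ẑ,Ẑ⟩ = ⟨Ŵ,Ŵ⟩ = ⟨Ẑ,Ŵ⟩ = 0; (2) R has nonnegative complex sectional curvature, i.e. R(Z, W, Z̄, W̄) ≥ 0 for all Z, W ∈ ℂⁿ. -/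
open Complex

noncomputable section

/-- The complexified projection `ℂ^{n+2} → ℂⁿ` onto the first `n` coordinates. -/
def projC2 {n : ℕ} (Z : Fin (n + 2) → ℂ) : Fin n → ℂ := fun i => Z (Fin.castAdd 2 i)

/-!
Both conditions only see `R` through the projections of `Ẑ, Ŵ`, and projection commutes with
conjugation, so (1) ⇐ (2) is immediate. For (1) ⇒ (2) it suffices that every pair `Z, W ∈ ℂⁿ`
is the projection of an isotropic pair, i.e. that the two extra coordinates can carry any
prescribed symmetric Gram matrix (here `-⟨Z,Z⟩, -⟨W,W⟩, -⟨Z,W⟩`). In the null coordinates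
`u = z₁ + i z₂`, `v = z₁ - i z₂` the form `z₁² + z₂²` on `ℂ²` becomes the hyperbolic form `uv`,
for which this only needs one square root.
-/

lemma projC2_conjV {n : ℕ} (Z : Fin (n + 2) → ℂ) :
    projC2 (conjV Z) = conjV (projC2 Z) := rfl

lemma projC2_append {n : ℕ} (Z : Fin n → ℂ) (z : Fin 2 → ℂ) :
    projC2 (Fin.append Z z) = Z := by
  funext i
  simp only [projC2, Fin.append_left]

lemma cInner_append {m k : ℕ} (Z W : Fin m → ℂ) (z w : Fin k → ℂ) :
    cInner (Fin.append Z z) (Fin.append W w) = cInner Z W + cInner z w := by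
  simp [cInner, Fin.sum_univ_add, Fin.append_left, Fin.append_right]

lemma exists_hyperbolic_gram {K : Type*} [Field K] [IsAlgClosed K] (a b c : K) :
    ∃ u v p q : K, u * v = a ∧ p * q = b ∧ u * q + v * p = 2 * c := by
  by_cases ha : a = 0
  · exact ⟨0, 2 * c, 1, b, by simp [ha], by ring, by ring⟩
  obtain ⟨d, hd⟩ := IsAlgClosed.exists_pow_nat_eq (c ^ 2 - a * b) two_pos
  refine ⟨1, a, (c + d) / a, c - d, by ring, ?_, ?_⟩
  · field_simp
    linear_combination -hd
  · field_simp
    ring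

lemma cInner_nullCoords (u v p q : ℂ) :
    cInner ![(u + v) / 2, I * (v - u) / 2] ![(p + q) / 2, I * (q - p) / 2] =
      (u * q + v * p) / 2 := by
  simp only [cInner, Fin.sum_univ_two, Matrix.cons_val_zero, Matrix.cons_val_one]
  linear_combination (v - u) * (q - p) / 4 * I_sq

lemma exists_fin_two_gram (a b c : ℂ) :
    ∃ z w : Fin 2 → ℂ, cInner z z = a ∧ cInner w w = b ∧ cInner z w = c := by
  obtain ⟨u, v, p, q, huv, hpq, hpolar⟩ := exists_hyperbolic_gram a b c
  refine ⟨![(u + v) / 2, I * (v - u) / 2], ![(p + q) / 2, I * (q - p) / 2], ?_, ?_, ?_⟩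
  · rw [cInner_nullCoords, ← huv]
    ring
  · rw [cInner_nullCoords, ← hpq]
    ring
  · rw [cInner_nullCoords, hpolar]
    ring

lemma exists_isotropic_lift {n : ℕ} (Z W : Fin n → ℂ) :
    ∃ Zh Wh : Fin (n + 2) → ℂ, cInner Zh Zh = 0 ∧ cInner Wh Wh = 0 ∧ cInner Zh Wh = 0 ∧
      projC2 Zh = Z ∧ projC2 Wh = W := by
  obtain ⟨z, w, hz, hw, hzw⟩ := exists_fin_two_gram (-cInner Z Z) (-cInner W W) (-cInner Z W)
  refine ⟨Fin.append Z z, Fin.append W w, ?_, ?_, ?_, projC2_append Z z, projC2_append W w⟩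
  · rw [cInner_append, hz, add_neg_cancel]
  · rw [cInner_append, hw, add_neg_cancel]
  · rw [cInner_append, hzw, add_neg_cancel]

/-- `R̂` (the pullback of `R` to `ℝ^{n+2}`) has nonnegative isotropic
curvature iff `R` has nonnegative complex sectional curvature. -/
theorem hatC_iff_nonnegCSC {n : ℕ} (T : AlgCurv n) :
    (∀ Zh Wh : Fin (n + 2) → ℂ,
        cInner Zh Zh = 0 → cInner Wh Wh = 0 → cInner Zh Wh = 0 →
        ∃ r : ℝ, 0 ≤ r ∧
          T.evalC (projC2 Zh) (projC2 Wh) (projC2 (conjV Zh)) (projC2 (conjV Wh)) = (r : ℂ))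
    ↔ nonnegCSC T := by
  constructor
  · intro hiso Z W
    obtain ⟨Zh, Wh, hZ, hW, hZW, rfl, rfl⟩ := exists_isotropic_lift Z W
    simpa only [projC2_conjV] using hiso Zh Wh hZ hW hZW
  · intro hcsc Zh Wh _ _ _
    simpa only [projC2_conjV] using hcsc (projC2 Zh) (projC2 Wh)
end
end

section
/- Let R be an algebraic curvature tensor on ℝⁿ which is positive semidefinite as a quadratic form on 2-forms: for every skew-symmetric real n×n matrix ω, Σ_{i,j,k,l} R(eᵢ, eⱼ, e_k, e_l)·ω_{ij}·ω_{kl} ≥ 0, where {eᵢ} is the standard basis of ℝⁿ. Then R has nonnegative complex sectional curvature: R(Z, W, Z̄, W̄) ≥ 0 for all Z, W ∈ ℂⁿ. -/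
/-!
Put `ω = Z ∧ W`, i.e. `ω i j = Z i * W j - Z j * W i`. The two skew-symmetries of `R` give
`∑ R i j k l * ω i j * conj (ω k l) = 4 R(Z, W, Z̄, W̄)`. Writing `ω = a + i b` with `a`, `b`
real skew-symmetric matrices, the cross terms cancel by pair symmetry, so this Hermitian
expression equals `Q(a) + Q(b)`, where `Q` is the quadratic form on 2-forms assumed nonnegative.
-/

open Complex

noncomputable section

open Finset ComplexConjugate

theorem sum_symm_mul_conj_eq_ofReal {κ : Type*} [Fintype κ] {M : κ → κ → ℝ}
    (hM : ∀ p q, M p q = M q p) (v : κ → ℂ) :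
    ∑ p, ∑ q, (M p q : ℂ) * v p * conj (v q) =
      ((∑ p, ∑ q, M p q * (v p).re * (v q).re +
        ∑ p, ∑ q, M p q * (v p).im * (v q).im : ℝ) : ℂ) := by
  apply Complex.ext
  · simp only [Complex.re_sum, Complex.ofReal_re, ← sum_add_distrib]
    refine sum_congr rfl fun p _ => sum_congr rfl fun q _ => ?_
    simp only [Complex.mul_re, Complex.ofReal_re, Complex.ofReal_im, Complex.conj_re,
      Complex.conj_im, Complex.mul_im]
    ring
  · have hswap :
        ∑ p, ∑ q, M p q * (v p).re * (v q).im = ∑ p, ∑ q, M p q * (v p).im * (v q).re := by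
      rw [sum_comm]
      exact sum_congr rfl fun p _ => sum_congr rfl fun q _ => by rw [hM]; ring
    simp only [Complex.im_sum, Complex.ofReal_im, Complex.mul_im, Complex.mul_re,
      Complex.ofReal_re, Complex.conj_re, Complex.conj_im, zero_mul, sub_zero, add_zero]
    simp only [mul_neg, ← sub_eq_neg_add, sum_sub_distrib, hswap, sub_self]

theorem sum_antisymm_mul_wedge {ι : Type*} [Fintype ι] {f : ι → ι → ℂ}
    (hf : ∀ i j, f j i = -f i j) (x y : ι → ℂ) :
    ∑ i, ∑ j, f i j * (x i * y j - x j * y i) = 2 * ∑ i, ∑ j, f i j * x i * y j := by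
  have hswap : ∑ i, ∑ j, f i j * (x j * y i) = -∑ i, ∑ j, f i j * x i * y j := by
    rw [sum_comm]
    simp only [← sum_neg_distrib]
    exact sum_congr rfl fun i _ => sum_congr rfl fun j _ => by rw [hf]; ring
  simp only [mul_sub, sum_sub_distrib, hswap, mul_assoc]
  ring

theorem sum4_mul_conj_eq_ofReal {ι : Type*} [Fintype ι] {R : ι → ι → ι → ι → ℝ}
    (hR : ∀ i j k l, R i j k l = R k l i j) (ω : ι → ι → ℂ) :
    ∑ i, ∑ j, ∑ k, ∑ l, (R i j k l : ℂ) * ω i j * conj (ω k l) =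
      ((∑ i, ∑ j, ∑ k, ∑ l, R i j k l * (ω i j).re * (ω k l).re +
        ∑ i, ∑ j, ∑ k, ∑ l, R i j k l * (ω i j).im * (ω k l).im : ℝ) : ℂ) := by
  simpa only [Fintype.sum_prod_type] using
    sum_symm_mul_conj_eq_ofReal (M := fun p q : ι × ι => R p.1 p.2 q.1 q.2)
      (fun p q => hR _ _ _ _) (fun p => ω p.1 p.2)

namespace AlgCurv

variable {n : ℕ}

theorem sum_wedge_mul_wedge (T : AlgCurv n) (Z W U V : Fin n → ℂ) :
    ∑ i, ∑ j, ∑ k, ∑ l,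
        (T.R i j k l : ℂ) * (Z i * W j - Z j * W i) * (U k * V l - U l * V k) =
      4 * T.evalC Z W U V := by
  set g : Fin n → Fin n → ℂ := fun i j => ∑ k, ∑ l, (T.R i j k l : ℂ) * U k * V l
  have hg : ∀ i j, g j i = -g i j := fun i j => by
    simp only [g, ← sum_neg_distrib]
    exact sum_congr rfl fun k _ => sum_congr rfl fun l _ => by rw [T.skew₁ j i]; push_cast; ring
  have hinner : ∀ i j, ∑ k, ∑ l, (T.R i j k l : ℂ) * (U k * V l - U l * V k) = 2 * g i j :=
    fun i j => sum_antisymm_mul_wedge (fun k l => by rw [T.skew₂ i j l k]; push_cast; ring) U V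
  calc ∑ i, ∑ j, ∑ k, ∑ l,
        (T.R i j k l : ℂ) * (Z i * W j - Z j * W i) * (U k * V l - U l * V k)
      = ∑ i, ∑ j, 2 * g i j * (Z i * W j - Z j * W i) := by
        refine sum_congr rfl fun i _ => sum_congr rfl fun j _ => ?_
        rw [← hinner, sum_mul]
        refine sum_congr rfl fun k _ => ?_
        rw [sum_mul]
        exact sum_congr rfl fun l _ => by ring
    _ = 4 * T.evalC Z W U V := by
        rw [sum_antisymm_mul_wedge (f := fun i j => 2 * g i j) (fun i j => by rw [hg]; ring)]
        simp only [evalC, g, mul_sum, sum_mul]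
        exact sum_congr rfl fun i _ => sum_congr rfl fun j _ =>
          sum_congr rfl fun k _ => sum_congr rfl fun l _ => by ring

end AlgCurv

/-- a curvature tensor which is positive semidefinite as a quadratic
form on 2-forms has nonnegative complex sectional curvature. -/
theorem psd_operator_nonnegCSC {n : ℕ} (T : AlgCurv n)
    (hpsd : ∀ ω : Matrix (Fin n) (Fin n) ℝ, ω.transpose = -ω →
      0 ≤ ∑ i : Fin n, ∑ j : Fin n, ∑ k : Fin n, ∑ l : Fin n,
            T.R i j k l * ω i j * ω k l) :
    nonnegCSC T := by
  intro Z W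
  set ω : Fin n → Fin n → ℂ := fun i j => Z i * W j - Z j * W i
  have hω : ∀ i j, ω j i = -ω i j := fun i j => by simp only [ω]; ring
  have hre := hpsd (Matrix.of fun i j => (ω i j).re) (by ext i j; simp [hω j i])
  have him := hpsd (Matrix.of fun i j => (ω i j).im) (by ext i j; simp [hω j i])
  simp only [Matrix.of_apply] at hre him
  refine ⟨_, div_nonneg (add_nonneg hre him) zero_le_four, ?_⟩
  have hconj : ∀ k l, conj (ω k l) = conjV Z k * conjV W l - conjV Z l * conjV W k :=
    fun k l => by simp only [ω, conjV, map_sub, map_mul]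
  have hwedge : ∑ i, ∑ j, ∑ k, ∑ l, (T.R i j k l : ℂ) * ω i j * conj (ω k l) =
      4 * T.evalC Z W (conjV Z) (conjV W) := by
    simpa only [hconj] using T.sum_wedge_mul_wedge Z W _ _
  have hreal := sum4_mul_conj_eq_ofReal T.pair_symm ω
  rw [hwedge] at hreal
  rw [Complex.ofReal_div, Complex.ofReal_ofNat]
  linear_combination hreal / 4
end
end
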